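/- Let δ > 0 with δ ≠ 1, let k be a nonnegative integer, and set s = 1/2 + k. Define g : ℂ → ℂ by g(ω) = ω·((δ² − 1)/δ²)·sin(ω)·[ −2δ·cos(ω)·cos(ωs) + (1 + δ²)·sin(ω)·sin(ωs) ]. Then g(π) = 0, g'(π) = 0, and g''(π) ≠ 0; that is, ω = π is a zero of g of order exactly two. -/

import Mathlib

open Complex

/-- The characteristic function `f̃(ω; δ)` of the symmetric dimer with spacing `s` under the
perfect transmission radiation conditions. -/
noncomputable def gfun (δ s : ℝ) (ω : ℂ) : ℂ :=
  ω * (((δ : ℂ) ^ 2 - 1) / (δ : ℂ) ^ 2) * Complex.sin ω *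
    (-2 * (δ : ℂ) * Complex.cos ω * Complex.cos (ω * (s : ℂ))
      + (1 + (δ : ℂ) ^ 2) * Complex.sin ω * Complex.sin (ω * (s : ℂ)))

/-!
Write `g(ω) = c ω sin ω · B(ω)` with `c = (δ² - 1)/δ²` and `B` the bracket. Both factors vanish
at `π`: `sin π = 0`, and `B(π) = 0` because also `cos(π s) = 0` for `s ∈ 1/2 + ℕ`. For a product
`u v` of two functions vanishing at a point, `(u v)' = 0` and `(u v)'' = 2 u' v'` there. Here
`u'(π) = -c π` and `B'(π) = -(2 δ s + 1 + δ²) sin(π s) = -(2 δ s + 1 + δ²) (-1)^k`, and both are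
nonzero since `δ > 0` and `δ ≠ 1`.
-/

section ProductOfVanishing

variable {𝕜 𝔸 : Type*} [NontriviallyNormedField 𝕜] [NormedRing 𝔸] [NormedAlgebra 𝕜 𝔸]
  {f g : 𝕜 → 𝔸} {x : 𝕜}

lemma deriv_mul_eq_zero_of_eq_zero (hf : DifferentiableAt 𝕜 f x) (hg : DifferentiableAt 𝕜 g x)
    (hfx : f x = 0) (hgx : g x = 0) : deriv (f * g) x = 0 := by
  rw [deriv_mul hf hg, hfx, hgx, zero_mul, mul_zero, add_zero]

lemma iteratedDeriv_two_mul_of_eq_zero (hf : ContDiffAt 𝕜 2 f x) (hg : ContDiffAt 𝕜 2 g x)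
    (hfx : f x = 0) (hgx : g x = 0) :
    iteratedDeriv 2 (f * g) x = 2 * deriv f x * deriv g x := by
  rw [iteratedDeriv_mul hf hg]
  simp [Finset.sum_range_succ, hfx, hgx]

end ProductOfVanishing

lemma cos_pi_mul_half_add_nat (k : ℕ) : Complex.cos (Real.pi * (1 / 2 + k)) = 0 := by
  rw [show (Real.pi : ℂ) * (1 / 2 + k) = k * Real.pi + Real.pi / 2 by ring, cos_add_pi_div_two,
    sin_nat_mul_pi, neg_zero]

lemma sin_pi_mul_half_add_nat (k : ℕ) : Complex.sin (Real.pi * (1 / 2 + k)) = (-1) ^ k := by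
  rw [show (Real.pi : ℂ) * (1 / 2 + k) = k * Real.pi + Real.pi / 2 by ring, sin_add_pi_div_two,
    ← ofReal_natCast, ← ofReal_mul, ← ofReal_cos, Real.cos_nat_mul_pi]
  push_cast
  rfl

noncomputable def dimerBracket (δ s : ℝ) (ω : ℂ) : ℂ :=
  -2 * (δ : ℂ) * Complex.cos ω * Complex.cos (ω * (s : ℂ))
    + (1 + (δ : ℂ) ^ 2) * Complex.sin ω * Complex.sin (ω * (s : ℂ))

lemma gfun_eq_mul_dimerBracket (δ s : ℝ) :
    gfun δ s =
      (fun ω => ω * (((δ : ℂ) ^ 2 - 1) / (δ : ℂ) ^ 2) * Complex.sin ω) * dimerBracket δ s :=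
  rfl

lemma contDiff_dimerBracket (δ s : ℝ) {n : WithTop ℕ∞} : ContDiff ℂ n (dimerBracket δ s) := by
  unfold dimerBracket
  fun_prop

lemma hasDerivAt_dimerBracket (δ s : ℝ) (ω : ℂ) :
    HasDerivAt (dimerBracket δ s)
      ((2 * δ + (1 + δ ^ 2) * s) * Complex.sin ω * Complex.cos (ω * s)
        + (2 * δ * s + 1 + δ ^ 2) * Complex.cos ω * Complex.sin (ω * s)) ω := by
  have hmul : HasDerivAt (fun ω : ℂ => ω * s) s ω := hasDerivAt_mul_const _
  have h : HasDerivAt (dimerBracket δ s) _ ω :=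
    (((hasDerivAt_cos ω).const_mul (-2 * (δ : ℂ))).mul ((hasDerivAt_cos _).comp ω hmul)).add
      (((hasDerivAt_sin ω).const_mul (1 + (δ : ℂ) ^ 2)).mul ((hasDerivAt_sin _).comp ω hmul))
  convert h using 1
  simp only [Function.comp_apply]
  ring

lemma dimerBracket_pi {δ s : ℝ} (hs : Complex.cos (Real.pi * s) = 0) :
    dimerBracket δ s Real.pi = 0 := by
  simp [dimerBracket, hs]

lemma deriv_dimerBracket_pi {δ s : ℝ} (hs : Complex.cos (Real.pi * s) = 0) :
    deriv (dimerBracket δ s) Real.pi = -(2 * δ * s + 1 + δ ^ 2) * Complex.sin (Real.pi * s) := by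
  rw [(hasDerivAt_dimerBracket δ s Real.pi).deriv]
  simp [hs]

lemma deriv_mul_const_mul_sin_pi (c : ℂ) :
    deriv (fun ω => ω * c * Complex.sin ω) Real.pi = -(Real.pi * c) := by
  have h : HasDerivAt (fun ω => ω * c * Complex.sin ω) _ Real.pi :=
    (hasDerivAt_mul_const c).mul (hasDerivAt_sin (Real.pi : ℂ))
  rw [h.deriv]
  simp

/-- For `s = 1/2 + k` with `k ∈ ℤ≥0`, `ω = π` is a zero of order exactly two of `g = f̃(·; δ)`:
an exact exceptional point for every `δ > 0`, `δ ≠ 1`. -/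
theorem stmt_8 (δ : ℝ) (hδ : 0 < δ) (hδ1 : δ ≠ 1) (k : ℕ) :
    gfun δ (1 / 2 + k) (Real.pi : ℂ) = 0 ∧
    deriv (gfun δ (1 / 2 + k)) (Real.pi : ℂ) = 0 ∧
    iteratedDeriv 2 (gfun δ (1 / 2 + k)) (Real.pi : ℂ) ≠ 0 := by
  have hcos : Complex.cos (Real.pi * ((1 / 2 + k : ℝ) : ℂ)) = 0 := by
    push_cast
    exact cos_pi_mul_half_add_nat k
  have hsin : Complex.sin (Real.pi * ((1 / 2 + k : ℝ) : ℂ)) = (-1) ^ k := by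
    push_cast
    exact sin_pi_mul_half_add_nat k
  have hpre : ContDiff ℂ 2 (fun ω => ω * (((δ : ℂ) ^ 2 - 1) / (δ : ℂ) ^ 2) * Complex.sin ω) := by
    fun_prop
  have hpre_pi : (Real.pi : ℂ) * (((δ : ℂ) ^ 2 - 1) / (δ : ℂ) ^ 2) * Complex.sin Real.pi = 0 := by
    simp
  rw [gfun_eq_mul_dimerBracket]
  refine ⟨by simp, deriv_mul_eq_zero_of_eq_zero (hpre.differentiable two_ne_zero _)
    ((contDiff_dimerBracket _ _).differentiable two_ne_zero _) hpre_pi (dimerBracket_pi hcos), ?_⟩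
  rw [iteratedDeriv_two_mul_of_eq_zero hpre.contDiffAt (contDiff_dimerBracket _ _).contDiffAt
    hpre_pi (dimerBracket_pi hcos), deriv_mul_const_mul_sin_pi, deriv_dimerBracket_pi hcos, hsin]
  have hδsq : δ ^ 2 - 1 ≠ 0 :=
    sub_ne_zero.2 fun h => hδ1 ((pow_eq_one_iff_of_nonneg hδ.le two_ne_zero).1 h)
  have hpos : 0 < 2 * δ * (1 / 2 + k) + 1 + δ ^ 2 := by positivity
  norm_cast
  simp [hδ.ne', hδsq, Real.pi_ne_zero]
  linarith
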